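/- Let r ∈ ℕ, l ∈ ℤ, {a_k}_{k=0}^∞ ⊂ ℂ, and n, N ∈ ℕ with n ≤ N. If x ∈ (2lπ/r, (2l+1)π/r), then |Σ_{k=n}^{N} a_k sin(kx)| ≤ (π/(2(rx − 2πl))) · ( Σ_{k=n}^{N} |Δ_r a_k| + Σ_{k=N+1}^{N+r} |a_k| + Σ_{k=n}^{n+r−1} |a_k| ). -/

import Mathlib

noncomputable section

theorem statement3 (r : ℕ) (hr : 1 ≤ r) (l : ℤ) (a : ℕ → ℂ) (n N : ℕ) (hnN : n ≤ N)
    (x : ℝ) (hx₁ : 2 * l * Real.pi / r < x) (hx₂ : x < (2 * l + 1) * Real.pi / r) :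
    ‖∑ k ∈ Finset.Icc n N, a k * (Real.sin (k * x) : ℂ)‖ ≤
      Real.pi / (2 * (r * x - 2 * Real.pi * l)) *
        (∑ k ∈ Finset.Icc n N, ‖a k - a (k + r)‖ +
         ∑ k ∈ Finset.Icc (N + 1) (N + r), ‖a k‖ +
         ∑ k ∈ Finset.Icc n (n + r - 1), ‖a k‖) := by
  have hr0 : (0:ℝ) < r := by exact_mod_cast hr
  have hpi := Real.pi_pos
  set y : ℝ := (r : ℝ) * x - 2 * Real.pi * l with hy
  have hy0 : 0 < y := by
    rw [div_lt_iff₀ hr0] at hx₁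
    simp only [hy]; nlinarith
  have hyπ : y < Real.pi := by
    rw [lt_div_iff₀ hr0] at hx₂
    simp only [hy]; nlinarith
  have hs2 : 0 < Real.sin (y / 2) :=
    Real.sin_pos_of_pos_of_lt_pi (by linarith) (by linarith)
  have hrx : (r : ℝ) * x / 2 = y / 2 + (l : ℝ) * Real.pi := by
    simp only [hy]; ring
  have hsin_abs : |Real.sin ((r : ℝ) * x / 2)| = Real.sin (y / 2) := by
    rw [hrx, Real.sin_add_int_mul_pi, abs_mul, abs_of_pos hs2]
    have h1n : |((-1 : ℝ)) ^ l| = 1 := by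
      rcases Int.even_or_odd l with h | h
      · rw [h.neg_one_zpow]; norm_num
      · rw [h.neg_one_zpow]; norm_num
    rw [h1n, one_mul]
  have hsin_ne : Real.sin ((r : ℝ) * x / 2) ≠ 0 := by
    intro h
    rw [h, abs_zero] at hsin_abs
    linarith
  set P : ℕ → ℝ := fun k => Real.cos ((k : ℝ) * x - (r : ℝ) * x / 2) /
      (2 * Real.sin ((r : ℝ) * x / 2)) with hP
  set B : ℝ := Real.pi / (2 * y) with hBdef
  have hB0 : 0 < B := by positivity
  -- Jordan-type bound on P
  have hPb : ∀ k : ℕ, |P k| ≤ B := by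
    intro k
    have hJ : y / Real.pi ≤ Real.sin (y / 2) := by
      have h2 := Real.mul_le_sin (x := y / 2) (by linarith) (by linarith)
      calc y / Real.pi = 2 / Real.pi * (y / 2) := by ring
        _ ≤ Real.sin (y / 2) := h2
    have h1 : |P k| ≤ 1 / (2 * Real.sin (y / 2)) := by
      rw [hP]
      simp only []
      rw [abs_div, abs_mul, abs_two, hsin_abs,
        div_le_div_iff_of_pos_right (by linarith : (0:ℝ) < 2 * Real.sin (y / 2))]
      exact Real.abs_cos_le_one _
    refine h1.trans ?_
    have hJ' : y ≤ Real.pi * Real.sin (y / 2) := by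
      rw [div_le_iff₀ hpi] at hJ
      linarith [hJ]
    rw [hBdef, div_le_div_iff₀ (by positivity) (by positivity)]
    nlinarith
  -- telescoping identity
  have htel : ∀ k : ℕ, Real.sin ((k : ℝ) * x) = P k - P (k + r) := by
    intro k
    rw [hP]
    simp only []
    have harg : ((k + r : ℕ) : ℝ) * x - (r : ℝ) * x / 2 =
        (k : ℝ) * x + (r : ℝ) * x / 2 := by push_cast; ring
    rw [harg, div_sub_div_same, Real.cos_sub_cos]
    have : ((k:ℝ) * x - (r:ℝ) * x / 2 + ((k:ℝ) * x + (r:ℝ) * x / 2)) / 2 = (k:ℝ) * x := by ring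
    rw [this]
    have : ((k:ℝ) * x - (r:ℝ) * x / 2 - ((k:ℝ) * x + (r:ℝ) * x / 2)) / 2 = -((r:ℝ) * x / 2) := by
      ring
    rw [this, Real.sin_neg]
    field_simp
    ring_nf
    rw [mul_assoc, mul_inv_cancel₀ (by rw [show x * (r:ℝ) * (1/2) = r * x / 2 by ring]; exact hsin_ne), mul_one]
  -- sum manipulation
  have hunion1 : ∀ g : ℕ → ℂ, ∑ k ∈ Finset.Icc n (N + r), g k =
      ∑ k ∈ Finset.Icc n N, g k + ∑ k ∈ Finset.Icc (N + 1) (N + r), g k := by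
    intro g
    have hdisj : Disjoint (Finset.Icc n N) (Finset.Icc (N + 1) (N + r)) := by
      rw [Finset.disjoint_left]
      intro z hz1 hz2
      simp only [Finset.mem_Icc] at hz1 hz2
      omega
    rw [← Finset.sum_union hdisj]
    congr 1
    ext z
    simp only [Finset.mem_Icc, Finset.mem_union]
    omega
  have hunion2 : ∀ g : ℕ → ℂ, ∑ k ∈ Finset.Icc n (N + r), g k =
      ∑ k ∈ Finset.Icc n (n + r - 1), g k + ∑ k ∈ Finset.Icc (n + r) (N + r), g k := by
    intro g
    have hdisj : Disjoint (Finset.Icc n (n + r - 1)) (Finset.Icc (n + r) (N + r)) := by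
      rw [Finset.disjoint_left]
      intro z hz1 hz2
      simp only [Finset.mem_Icc] at hz1 hz2
      omega
    rw [← Finset.sum_union hdisj]
    congr 1
    ext z
    simp only [Finset.mem_Icc, Finset.mem_union]
    omega
  have hreindex : ∀ g : ℕ → ℂ, ∑ k ∈ Finset.Icc n N, g (k + r) =
      ∑ k ∈ Finset.Icc (n + r) (N + r), g k := by
    intro g
    have hmap : Finset.Icc (n + r) (N + r) =
        (Finset.Icc n N).map ⟨fun k => k + r, fun _ _ h => by simpa using h⟩ := by
      ext z
      simp only [Finset.mem_map, Finset.mem_Icc, Function.Embedding.coeFn_mk]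
      constructor
      · intro hz
        exact ⟨z - r, by omega, by show z - r + r = z; omega⟩
      · rintro ⟨w, hw, rfl⟩
        show n + r ≤ w + r ∧ w + r ≤ N + r
        omega
    rw [hmap, Finset.sum_map]
    rfl
  -- the key identity
  have key : ∑ k ∈ Finset.Icc n N, a k * (Real.sin ((k : ℝ) * x) : ℂ) =
      (∑ k ∈ Finset.Icc n (n + r - 1), a k * (P k : ℂ)) -
      (∑ k ∈ Finset.Icc n N, (a k - a (k + r)) * (P (k + r) : ℂ)) -
      (∑ k ∈ Finset.Icc (N + 1) (N + r), a k * (P k : ℂ)) := by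
    have hLHS : ∑ k ∈ Finset.Icc n N, a k * (Real.sin ((k : ℝ) * x) : ℂ) =
        (∑ k ∈ Finset.Icc n N, a k * (P k : ℂ)) -
        (∑ k ∈ Finset.Icc n N, a k * (P (k + r) : ℂ)) := by
      rw [← Finset.sum_sub_distrib]
      apply Finset.sum_congr rfl
      intro k _
      rw [htel k]
      push_cast
      ring
    have hmid : ∑ k ∈ Finset.Icc n N, (a k - a (k + r)) * (P (k + r) : ℂ) =
        (∑ k ∈ Finset.Icc n N, a k * (P (k + r) : ℂ)) -
        (∑ k ∈ Finset.Icc n N, a (k + r) * (P (k + r) : ℂ)) := by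
      rw [← Finset.sum_sub_distrib]
      apply Finset.sum_congr rfl
      intro k _
      ring
    have hA3 : ∑ k ∈ Finset.Icc n N, a (k + r) * (P (k + r) : ℂ) =
        ∑ k ∈ Finset.Icc (n + r) (N + r), a k * (P k : ℂ) :=
      hreindex (fun k => a k * (P k : ℂ))
    have h1 := hunion1 (fun k => a k * (P k : ℂ))
    have h2 := hunion2 (fun k => a k * (P k : ℂ))
    rw [hLHS, hmid, hA3]
    linear_combination h2 - h1
  rw [key]
  -- bounding
  have hb : ∀ (s : Finset ℕ) (c : ℕ → ℂ) (m : ℕ → ℕ),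
      ‖∑ k ∈ s, c k * (P (m k) : ℂ)‖ ≤ B * ∑ k ∈ s, ‖c k‖ := by
    intro s c m
    calc ‖∑ k ∈ s, c k * (P (m k) : ℂ)‖ ≤ ∑ k ∈ s, ‖c k * (P (m k) : ℂ)‖ :=
          norm_sum_le _ _
      _ = ∑ k ∈ s, ‖c k‖ * |P (m k)| := by
          apply Finset.sum_congr rfl
          intro k _
          rw [norm_mul, Complex.norm_real, Real.norm_eq_abs]
      _ ≤ ∑ k ∈ s, ‖c k‖ * B := by
          apply Finset.sum_le_sum
          intro k _
          exact mul_le_mul_of_nonneg_left (hPb (m k)) (norm_nonneg _)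
      _ = B * ∑ k ∈ s, ‖c k‖ := by rw [← Finset.sum_mul]; ring
  have e1 := hb (Finset.Icc n (n + r - 1)) a id
  have e2 := hb (Finset.Icc n N) (fun k => a k - a (k + r)) (fun k => k + r)
  have e3 := hb (Finset.Icc (N + 1) (N + r)) a id
  simp only [id] at e1 e3
  calc ‖(∑ k ∈ Finset.Icc n (n + r - 1), a k * (P k : ℂ)) -
      (∑ k ∈ Finset.Icc n N, (a k - a (k + r)) * (P (k + r) : ℂ)) -
      (∑ k ∈ Finset.Icc (N + 1) (N + r), a k * (P k : ℂ))‖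
      ≤ ‖(∑ k ∈ Finset.Icc n (n + r - 1), a k * (P k : ℂ)) -
      (∑ k ∈ Finset.Icc n N, (a k - a (k + r)) * (P (k + r) : ℂ))‖ +
      ‖∑ k ∈ Finset.Icc (N + 1) (N + r), a k * (P k : ℂ)‖ := norm_sub_le _ _
    _ ≤ ‖∑ k ∈ Finset.Icc n (n + r - 1), a k * (P k : ℂ)‖ +
      ‖∑ k ∈ Finset.Icc n N, (a k - a (k + r)) * (P (k + r) : ℂ)‖ +
      ‖∑ k ∈ Finset.Icc (N + 1) (N + r), a k * (P k : ℂ)‖ := by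
        gcongr
        exact norm_sub_le _ _
    _ ≤ B * (∑ k ∈ Finset.Icc n (n + r - 1), ‖a k‖) +
        B * (∑ k ∈ Finset.Icc n N, ‖a k - a (k + r)‖) +
        B * (∑ k ∈ Finset.Icc (N + 1) (N + r), ‖a k‖) := by
        gcongr <;> first | exact e1 | exact e2 | exact e3
    _ = B * (∑ k ∈ Finset.Icc n N, ‖a k - a (k + r)‖ +
         ∑ k ∈ Finset.Icc (N + 1) (N + r), ‖a k‖ +
         ∑ k ∈ Finset.Icc n (n + r - 1), ‖a k‖) := by ring
    _ = Real.pi / (2 * (r * x - 2 * Real.pi * l)) * _ := by rw [hBdef]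

end
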